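/- (Consistency of the dense unpaired GMM estimator.) Under Assumption 2 (Assumption 1 with centered variables and bounded fourth moments; rank(Cov(I,X)) = d; weight matrices W_N → W₀ in probability with W₀ positive definite), the GMM estimator β̂_GMM(W_N) := argmin_β ĝ_N(β)ᵀ W_N ĝ_N(β), where ĝ_N(β) := (1/n)Σ_{i=1}^n I_i Y_i − ((1/ñ)Σ_{j=1}^ñ Ĩ_j X̃_jᵀ)β, converges in probability to β* as N → ∞, i.e., for every ε > 0, P(‖β̂_GMM(W_N) − β*‖₂ > ε) → 0. -/

import Mathlib

open MeasureTheory ProbabilityTheory Filter Matrix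
open scoped Topology NNReal ENNReal

noncomputable section

/-- Cross-covariance matrix of two centered random vectors (equal to `E[U Vᵀ]`
for centered `U, V`). -/
def covMat {Ω : Type*} [MeasurableSpace Ω] (μ : Measure Ω) {ι κ : Type*}
    [Fintype ι] [Fintype κ] (U : Ω → ι → ℝ) (V : Ω → κ → ℝ) : Matrix ι κ ℝ :=
  Matrix.of fun i j => ∫ ω, U ω i * V ω j ∂μ

/-- Cross-covariance vector of a centered random vector and a centered
random variable. -/
def covVec {Ω : Type*} [MeasurableSpace Ω] (μ : Measure Ω) {ι : Type*}
    [Fintype ι] (U : Ω → ι → ℝ) (Y : Ω → ℝ) : ι → ℝ :=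
  fun i => ∫ ω, U ω i * Y ω ∂μ

/-- Variance (covariance) matrix of a random vector. -/
def varMat {Ω : Type*} [MeasurableSpace Ω] (μ : Measure Ω) {ι : Type*} [Fintype ι]
    (Z : Ω → ι → ℝ) : Matrix ι ι ℝ :=
  Matrix.of fun i j =>
    ∫ ω, Z ω i * Z ω j ∂μ - (∫ ω, Z ω i ∂μ) * (∫ ω, Z ω j ∂μ)

/-- Euclidean (ℓ2) norm of a finite-dimensional real vector. -/
def norm2 {ι : Type*} [Fintype ι] (v : ι → ℝ) : ℝ := Real.sqrt (∑ i, v i ^ 2)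

/-- ℓ0 "norm": number of nonzero entries. -/
def sparsity {ι : Type*} [Fintype ι] (v : ι → ℝ) : ℕ :=
  (Finset.univ.filter fun i => v i ≠ 0).card

/-- ℓ2 → ℓ2 operator norm of a real matrix. -/
def opNorm {ι κ : Type*} [Fintype ι] [Fintype κ] (A : Matrix ι κ ℝ) : ℝ :=
  sSup {y : ℝ | ∃ x : κ → ℝ, norm2 x ≤ 1 ∧ y = norm2 (A *ᵥ x)}

/-- Empirical cross-covariance matrix `Ĉov(Ĩ,X̃)` from the first `nt` observations. -/
def covHat {Ω : Type*} {m d : ℕ} (It : ℕ → Ω → Fin m → ℝ) (Xt : ℕ → Ω → Fin d → ℝ)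
    (nt : ℕ) (ω : Ω) : Matrix (Fin m) (Fin d) ℝ :=
  Matrix.of fun k l => (nt : ℝ)⁻¹ * ∑ j ∈ Finset.range nt, It j ω k * Xt j ω l

/-- Empirical cross-covariance `Ĉov(I,Y)` from the first `n` observations. -/
def covYHat {Ω : Type*} {m : ℕ} (I : ℕ → Ω → Fin m → ℝ) (Y : ℕ → Ω → ℝ)
    (n : ℕ) (ω : Ω) : Fin m → ℝ :=
  fun k => (n : ℝ)⁻¹ * ∑ i ∈ Finset.range n, I i ω k * Y i ω

/-- Sample moment `ĝ_N(β) = (1/n) Σ I_i Y_i − ((1/ñ) Σ Ĩ_j X̃_jᵀ) β`. -/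
def ghat {Ω : Type*} {m d : ℕ} (I : ℕ → Ω → Fin m → ℝ) (Y : ℕ → Ω → ℝ)
    (It : ℕ → Ω → Fin m → ℝ) (Xt : ℕ → Ω → Fin d → ℝ)
    (n nt : ℕ) (ω : Ω) (b : Fin d → ℝ) : Fin m → ℝ :=
  fun k => covYHat I Y n ω k - (covHat It Xt nt ω *ᵥ b) k

/-!
By the strong law of large numbers, `Ĉov(Ĩ,X̃) → Cov(Ĩ,X̃) = Cov(I,X) =: S` and
`Ĉov(I,Y) → Cov(I,Y) = S β*` almost surely, the second because exogeneity gives `E[I ε] = 0`;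
together with `W_N → W₀` the triple of sample moments converges in probability.

The rest is deterministic. If `λ ‖y‖² ≤ yᵀ Ŵ y` and `‖x‖ ≤ K ‖Ŝ x‖`, comparing the objective at a
minimizer `b̂` with its value at `β*` gives `‖b̂ - β*‖ ≤ K (1 + √(‖Ŵ‖ / λ)) ‖v̂ - Ŝ β*‖`. Both
bounds survive small perturbations of `(S, W₀)`, since `S` has full column rank and `W₀` is
positive definite, and the right-hand side vanishes at `(S, S β*, W₀)`. So `b̂` is within `δ` of
`β*` as soon as the sample moments lie in a fixed neighbourhood of their limits.
-/

open scoped RealInnerProductSpace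

theorem exists_pos_mul_sq_norm_le {E : Type*} [NormedAddCommGroup E] [NormedSpace ℝ E]
    [FiniteDimensional ℝ E] {q : E → ℝ} (hq : Continuous q)
    (hsmul : ∀ (c : ℝ) x, q (c • x) = c ^ 2 * q x) (hpos : ∀ x ≠ 0, 0 < q x) :
    ∃ c > 0, ∀ x, c * ‖x‖ ^ 2 ≤ q x := by
  have hq0 : q 0 = 0 := by simpa using hsmul 0 0
  rcases subsingleton_or_nontrivial E with hE | hE
  · exact ⟨1, one_pos, fun x => by simp [Subsingleton.elim x 0, hq0]⟩
  obtain ⟨x₀, hx₀, hmin⟩ := (isCompact_sphere (0 : E) 1).exists_isMinOn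
    (NormedSpace.sphere_nonempty.2 zero_le_one) hq.continuousOn
  have hx₀ : ‖x₀‖ = 1 := by simpa using hx₀
  refine ⟨q x₀, hpos x₀ (norm_ne_zero_iff.1 (by simp [hx₀])), fun x => ?_⟩
  rcases eq_or_ne x 0 with rfl | hx
  · simp [hq0]
  have hnx : 0 < ‖x‖ := norm_pos_iff.2 hx
  have hle : q x₀ ≤ q (‖x‖⁻¹ • x) := hmin (by simp [norm_smul, hnx.ne'])
  rw [hsmul, inv_pow] at hle
  rwa [le_inv_mul_iff₀ (by positivity), mul_comm] at hle

section Perturbation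

variable {E F G : Type*} [NormedAddCommGroup E] [NormedSpace ℝ E]
  [NormedAddCommGroup F] [NormedSpace ℝ F] [NormedAddCommGroup G] [InnerProductSpace ℝ G]

theorem eventually_forall_norm_le_two_mul_norm_apply {T₀ : E →L[ℝ] F} {K : ℝ} (hK : 0 < K)
    (hT₀ : ∀ x, ‖x‖ ≤ K * ‖T₀ x‖) : ∀ᶠ T in 𝓝 T₀, ∀ x, ‖x‖ ≤ 2 * K * ‖T x‖ := by
  filter_upwards [eventually_norm_sub_lt T₀ (inv_pos.2 (mul_pos two_pos hK))] with T hT x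
  have hperturb : ‖(T₀ - T) x‖ ≤ (2 * K)⁻¹ * ‖x‖ := by
    refine (T₀ - T).le_opNorm x |>.trans ?_
    rw [norm_sub_rev]
    gcongr
  have hsplit : ‖T₀ x‖ ≤ ‖T x‖ + ‖(T₀ - T) x‖ := by
    simpa using norm_add_le (T x) ((T₀ - T) x)
  have := hT₀ x
  field_simp at hperturb
  nlinarith

theorem eventually_forall_half_mul_sq_norm_le_inner {W₀ : G →L[ℝ] G} {c : ℝ} (hc : 0 < c)
    (hW₀ : ∀ y, c * ‖y‖ ^ 2 ≤ ⟪y, W₀ y⟫) : ∀ᶠ W in 𝓝 W₀, ∀ y, c / 2 * ‖y‖ ^ 2 ≤ ⟪y, W y⟫ := by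
  filter_upwards [eventually_norm_sub_lt W₀ (half_pos hc)] with W hW y
  have hperturb : |⟪y, (W - W₀) y⟫| ≤ c / 2 * ‖y‖ ^ 2 :=
    calc |⟪y, (W - W₀) y⟫| ≤ ‖y‖ * (‖W - W₀‖ * ‖y‖) :=
          (abs_real_inner_le_norm _ _).trans (by gcongr; exact (W - W₀).le_opNorm y)
      _ ≤ c / 2 * ‖y‖ ^ 2 := by nlinarith [norm_nonneg y]
  have hsplit : ⟪y, W y⟫ = ⟪y, W₀ y⟫ + ⟪y, (W - W₀) y⟫ := by
    simp [inner_sub_right]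
  linarith [hW₀ y, neg_abs_le ⟪y, (W - W₀) y⟫]

end Perturbation

section Argmin

variable {E F : Type*} [NormedAddCommGroup E] [NormedSpace ℝ E]
  [NormedAddCommGroup F] [InnerProductSpace ℝ F]

def gmmObjective (T : E →L[ℝ] F) (v : F) (W : F →L[ℝ] F) (b : E) : ℝ :=
  ⟪v - T b, W (v - T b)⟫

theorem norm_sub_le_of_gmmObjective_le {T : E →L[ℝ] F} {v : F} {W : F →L[ℝ] F} {b β : E}
    {K c : ℝ} (hK : 0 ≤ K) (hc : 0 < c) (hT : ∀ x, ‖x‖ ≤ K * ‖T x‖)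
    (hW : ∀ y, c * ‖y‖ ^ 2 ≤ ⟪y, W y⟫) (hb : gmmObjective T v W b ≤ gmmObjective T v W β) :
    ‖b - β‖ ≤ K * (1 + √(‖W‖ / c)) * ‖v - T β‖ := by
  set g := v - T b
  set g₀ := v - T β
  have hquad : c * ‖g‖ ^ 2 ≤ ‖W‖ * ‖g₀‖ ^ 2 :=
    calc c * ‖g‖ ^ 2 ≤ gmmObjective T v W b := hW g
      _ ≤ gmmObjective T v W β := hb
      _ ≤ ‖g₀‖ * (‖W‖ * ‖g₀‖) :=
          (real_inner_le_norm _ _).trans (by gcongr; exact W.le_opNorm g₀)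
      _ = ‖W‖ * ‖g₀‖ ^ 2 := by ring
  have hg : ‖g‖ ≤ √(‖W‖ / c) * ‖g₀‖ := by
    rw [← Real.sqrt_sq (norm_nonneg g), ← Real.sqrt_sq (norm_nonneg g₀), ← Real.sqrt_mul
      (div_nonneg (norm_nonneg W) hc.le)]
    refine Real.sqrt_le_sqrt ?_
    rw [div_mul_eq_mul_div, le_div_iff₀ hc]
    linarith
  have hTb : T (b - β) = g₀ - g := by simp [g, g₀, map_sub]
  calc ‖b - β‖ ≤ K * ‖g₀ - g‖ := hTb ▸ hT (b - β)
    _ ≤ K * (‖g₀‖ + √(‖W‖ / c) * ‖g₀‖) := by gcongr; exact (norm_sub_le _ _).trans (by gcongr)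
    _ = K * (1 + √(‖W‖ / c)) * ‖v - T β‖ := by ring

theorem eventually_forall_minimizer_norm_sub_le {T₀ : E →L[ℝ] F} {W₀ : F →L[ℝ] F} {K c : ℝ}
    (hK : 0 < K) (hc : 0 < c) (hT₀ : ∀ x, ‖x‖ ≤ K * ‖T₀ x‖) (hW₀ : ∀ y, c * ‖y‖ ^ 2 ≤ ⟪y, W₀ y⟫)
    (β : E) {δ : ℝ} (hδ : 0 < δ) :
    ∀ᶠ p : (E →L[ℝ] F) × F × (F →L[ℝ] F) in 𝓝 (T₀, T₀ β, W₀), ∀ b,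
      (∀ b', gmmObjective p.1 p.2.1 p.2.2 b ≤ gmmObjective p.1 p.2.1 p.2.2 b') → ‖b - β‖ ≤ δ := by
  have hbound : Tendsto (fun p : (E →L[ℝ] F) × F × (F →L[ℝ] F) =>
      2 * K * (1 + √(‖p.2.2‖ / (c / 2))) * ‖p.2.1 - p.1 β‖) (𝓝 (T₀, T₀ β, W₀)) (𝓝 0) := by
    have hcont : Continuous fun p : (E →L[ℝ] F) × F × (F →L[ℝ] F) =>
        2 * K * (1 + √(‖p.2.2‖ / (c / 2))) * ‖p.2.1 - p.1 β‖ := by fun_prop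
    simpa using hcont.tendsto (T₀, T₀ β, W₀)
  filter_upwards [(continuous_fst.tendsto _).eventually
      (eventually_forall_norm_le_two_mul_norm_apply hK hT₀),
    (continuous_snd.snd.tendsto _).eventually (eventually_forall_half_mul_sq_norm_le_inner hc hW₀),
    hbound.eventually (ge_mem_nhds hδ)] with p hT hW hsmall b hb
  exact (norm_sub_le_of_gmmObjective_le (by positivity) (half_pos hc) hT hW (hb β)).trans hsmall

end Argmin

section EuclideanMatrix

theorem norm2_eq_norm_toLp {κ : Type*} [Fintype κ] (v : κ → ℝ) : norm2 v = ‖WithLp.toLp 2 v‖ := by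
  simp [norm2, EuclideanSpace.norm_eq]

variable {ι κ : Type*} [Fintype ι] [Fintype κ] [DecidableEq κ]

def Matrix.toL2CLM : Matrix ι κ ℝ ≃ₗ[ℝ] (EuclideanSpace ℝ κ →L[ℝ] EuclideanSpace ℝ ι) :=
  Matrix.toEuclideanLin.trans LinearMap.toContinuousLinearMap

@[simp]
theorem Matrix.toL2CLM_toLp (A : Matrix ι κ ℝ) (x : κ → ℝ) :
    A.toL2CLM (WithLp.toLp 2 x) = WithLp.toLp 2 (A *ᵥ x) := rfl

theorem Matrix.continuous_toL2CLM : Continuous (Matrix.toL2CLM : Matrix ι κ ℝ → _) := by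
  exact (Matrix.toL2CLM (ι := ι) (κ := κ)).toLinearMap.continuous_of_finiteDimensional

theorem Matrix.exists_norm_le_mul_norm_toL2CLM {A : Matrix ι κ ℝ}
    (hA : Function.Injective A.mulVec) :
    ∃ K > 0, ∀ x, ‖x‖ ≤ K * ‖A.toL2CLM x‖ := by
  have hinj : Function.Injective (Matrix.toEuclideanLin A) := fun x y hxy =>
    WithLp.ofLp_injective 2 (hA (congrArg WithLp.ofLp hxy))
  obtain ⟨K, hK, hanti⟩ := (Matrix.toEuclideanLin A).injective_iff_antilipschitz.1 hinj
  exact ⟨K, hK, ContinuousLinearMap.bound_of_antilipschitz A.toL2CLM hanti⟩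

theorem Matrix.PosDef.exists_mul_sq_norm_le_inner_toL2CLM [DecidableEq ι] {A : Matrix ι ι ℝ}
    (hA : A.PosDef) : ∃ c > 0, ∀ y, c * ‖y‖ ^ 2 ≤ ⟪y, A.toL2CLM y⟫ := by
  refine exists_pos_mul_sq_norm_le (by fun_prop) (fun c y => ?_) fun y hy => ?_
  · simp only [map_smul, real_inner_smul_left, real_inner_smul_right]
    ring
  · rw [← WithLp.toLp_ofLp 2 y, Matrix.toL2CLM_toLp, EuclideanSpace.inner_toLp_toLp, star_trivial,
      dotProduct_comm]
    simpa using hA.dotProduct_mulVec_pos (x := WithLp.ofLp y) (by simpa using hy)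

end EuclideanMatrix

theorem Matrix.mulVec_injective_of_rank_eq {ι κ K : Type*} [Fintype ι] [Fintype κ] [Field K]
    {A : Matrix ι κ K} (hA : A.rank = Fintype.card κ) : Function.Injective A.mulVec := by
  have hdim := LinearMap.finrank_range_add_finrank_ker A.mulVecLin
  rw [Module.finrank_fintype_fun_eq_card] at hdim
  have hker : LinearMap.ker A.mulVecLin = ⊥ :=
    Submodule.finrank_eq_zero.1 (by rw [Matrix.rank] at hA; omega)
  exact LinearMap.ker_eq_bot.1 hker

theorem eventually_forall_minimizer_norm2_sub_le {ι κ : Type*} [Fintype ι] [Fintype κ]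
    [DecidableEq ι] [DecidableEq κ] {S : Matrix ι κ ℝ} (hS : Function.Injective S.mulVec)
    {W₀ : Matrix ι ι ℝ} (hW₀ : W₀.PosDef) (β : κ → ℝ) {δ : ℝ} (hδ : 0 < δ) :
    ∀ᶠ p : Matrix ι κ ℝ × (ι → ℝ) × Matrix ι ι ℝ in 𝓝 (S, S *ᵥ β, W₀), ∀ b,
      (∀ b', (p.2.1 - p.1 *ᵥ b) ⬝ᵥ (p.2.2 *ᵥ (p.2.1 - p.1 *ᵥ b))
          ≤ (p.2.1 - p.1 *ᵥ b') ⬝ᵥ (p.2.2 *ᵥ (p.2.1 - p.1 *ᵥ b'))) →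
        norm2 (b - β) ≤ δ := by
  obtain ⟨K, hK, hSK⟩ := S.exists_norm_le_mul_norm_toL2CLM hS
  obtain ⟨c, hc, hWc⟩ := hW₀.exists_mul_sq_norm_le_inner_toL2CLM
  let Φ : Matrix ι κ ℝ × (ι → ℝ) × Matrix ι ι ℝ → _ :=
    fun p => (p.1.toL2CLM, WithLp.toLp 2 p.2.1, p.2.2.toL2CLM)
  have hΦ : Continuous Φ := by
    have := Matrix.continuous_toL2CLM (ι := ι) (κ := κ)
    have := Matrix.continuous_toL2CLM (ι := ι) (κ := ι)
    fun_prop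
  have hobj : ∀ p : Matrix ι κ ℝ × (ι → ℝ) × Matrix ι ι ℝ, ∀ b,
      gmmObjective (Φ p).1 (Φ p).2.1 (Φ p).2.2 (WithLp.toLp 2 b)
        = (p.2.1 - p.1 *ᵥ b) ⬝ᵥ (p.2.2 *ᵥ (p.2.1 - p.1 *ᵥ b)) := fun p b => by
    simp only [gmmObjective, Φ, Matrix.toL2CLM_toLp, ← WithLp.toLp_sub,
      EuclideanSpace.inner_toLp_toLp, star_trivial, dotProduct_comm]
  filter_upwards [(hΦ.tendsto _).eventually
    (eventually_forall_minimizer_norm_sub_le hK hc hSK hWc (WithLp.toLp 2 β) hδ)]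
    with p hp b hb
  rw [norm2_eq_norm_toLp, WithLp.toLp_sub]
  refine hp _ fun b' => ?_
  rw [← WithLp.toLp_ofLp 2 b', hobj, hobj]
  exact hb _

section ConvergenceInMeasure

variable {Ω α : Type*} [MeasurableSpace Ω] {μ : Measure Ω} {l : Filter α}

theorem tendstoInMeasure_pi {ι : Type*} [Fintype ι] {E : ι → Type*}
    [∀ i, PseudoMetricSpace (E i)] {f : α → Ω → ∀ i, E i} {g : Ω → ∀ i, E i}
    (h : ∀ i, TendstoInMeasure μ (fun a ω => f a ω i) l fun ω => g ω i) :
    TendstoInMeasure μ f l g := by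
  simp only [tendstoInMeasure_iff_dist] at h ⊢
  intro ε hε
  have hsub : ∀ a, {ω | ε ≤ dist (f a ω) (g ω)} ⊆ ⋃ i, {ω | ε ≤ dist (f a ω i) (g ω i)} := by
    intro a ω hω
    by_contra hc
    simp only [Set.mem_iUnion, Set.mem_ofPred_eq, not_exists, not_le] at hc
    exact not_le.2 ((dist_pi_lt_iff hε).2 hc) hω
  refine tendsto_of_tendsto_of_tendsto_of_le_of_le tendsto_const_nhds
    (by simpa using tendsto_finsetSum Finset.univ fun i _ => h i ε hε) (fun _ => zero_le)
    fun a => (measure_mono (hsub a)).trans (measure_iUnion_fintype_le μ _)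

theorem MeasureTheory.TendstoInMeasure.prodMk {E F : Type*} [PseudoMetricSpace E]
    [PseudoMetricSpace F]
    {f : α → Ω → E} {g : Ω → E} {f' : α → Ω → F} {g' : Ω → F}
    (hf : TendstoInMeasure μ f l g) (hf' : TendstoInMeasure μ f' l g') :
    TendstoInMeasure μ (fun a ω => (f a ω, f' a ω)) l fun ω => (g ω, g' ω) := by
  rw [tendstoInMeasure_iff_dist] at hf hf' ⊢
  intro ε hε
  have hsub : ∀ a, {ω | ε ≤ dist (f a ω, f' a ω) (g ω, g' ω)}
      ⊆ {ω | ε ≤ dist (f a ω) (g ω)} ∪ {ω | ε ≤ dist (f' a ω) (g' ω)} := fun a ω hω => by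
    simpa [Prod.dist_eq, le_max_iff] using hω
  refine tendsto_of_tendsto_of_tendsto_of_le_of_le tendsto_const_nhds
    (by simpa using (hf ε hε).add (hf' ε hε)) (fun _ => zero_le)
    fun a => (measure_mono (hsub a)).trans (measure_union_le _ _)

theorem MeasureTheory.TendstoInMeasure.tendsto_measure_setOf_notMem {E : Type*}
    [PseudoMetricSpace E] {f : α → Ω → E} {z : E} (hf : TendstoInMeasure μ f l fun _ => z)
    {U : Set E} (hU : U ∈ 𝓝 z) : Tendsto (fun a => μ {ω | f a ω ∉ U}) l (𝓝 0) := by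
  obtain ⟨ε, hε, hball⟩ := Metric.mem_nhds_iff.1 hU
  refine tendsto_of_tendsto_of_tendsto_of_le_of_le tendsto_const_nhds
    (tendstoInMeasure_iff_dist.1 hf ε hε) (fun _ => zero_le) fun a => measure_mono ?_
  intro ω hω
  by_contra hlt
  exact hω (hball (by simpa using hlt))

theorem tendstoInMeasure_average_comp [IsFiniteMeasure μ] {β : Type*} [MeasurableSpace β]
    {Z : ℕ → Ω → β} {φ : β → ℝ} (hZ : ∀ i, Measurable (Z i)) (hφ : Measurable φ)
    (hindep : iIndepFun Z μ) (hident : ∀ i, IdentDistrib (Z i) (Z 0) μ μ)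
    (hint : Integrable (fun ω => φ (Z 0 ω)) μ) {u : ℕ → ℕ} (hu : Tendsto u atTop atTop) :
    TendstoInMeasure μ (fun N ω => (u N : ℝ)⁻¹ * ∑ i ∈ Finset.range (u N), φ (Z i ω)) atTop
      fun _ => ∫ ω, φ (Z 0 ω) ∂μ := by
  have hslln := strong_law_ae (fun i ω => φ (Z i ω)) hint
    (fun i j hij => (hindep.indepFun hij).comp hφ hφ) fun i => (hident i).comp hφ
  refine tendstoInMeasure_of_tendsto_ae (fun N => ?_) ?_
  · exact (Measurable.const_mul (Finset.measurable_sum _ fun i _ => hφ.comp (hZ i)) _)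
      |>.aestronglyMeasurable
  · filter_upwards [hslln] with ω hω
    simpa [smul_eq_mul, Function.comp_def] using hω.comp hu

end ConvergenceInMeasure

theorem integral_mul_eq_zero_of_condExp_eq_zero {Ω : Type*} {m m₀ : MeasurableSpace Ω}
    {μ : Measure Ω} [IsFiniteMeasure μ] (hm : m ≤ m₀) {f g : Ω → ℝ}
    (hf : StronglyMeasurable[m] f) (hfg : Integrable (f * g) μ) (hg : Integrable g μ)
    (hcond : μ[g | m] =ᵐ[μ] 0) : ∫ ω, f ω * g ω ∂μ = 0 := by
  have : IsFiniteMeasure (μ.trim hm) := isFiniteMeasure_trim hm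
  calc ∫ ω, f ω * g ω ∂μ = ∫ ω, (μ[f * g | m]) ω ∂μ := (integral_condExp hm).symm
    _ = ∫ ω, (f * μ[g | m]) ω ∂μ :=
        integral_congr_ae (condExp_mul_of_stronglyMeasurable_left hf hfg hg)
    _ = 0 := by
      rw [integral_eq_zero_of_ae]
      filter_upwards [hcond] with ω hω
      simp [hω]

theorem tendsto_atTop_of_tendsto_div_pos {u : ℕ → ℕ} {τ : ℝ} (hτ : 0 < τ)
    (hu : Tendsto (fun N => (u N : ℝ) / N) atTop (𝓝 τ)) : Tendsto u atTop atTop := by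
  rw [← tendsto_natCast_atTop_iff (R := ℝ)]
  refine (tendsto_natCast_atTop_atTop.atTop_mul_pos hτ hu).congr' ?_
  filter_upwards [eventually_ne_atTop 0] with N hN
  field_simp

theorem covVec_eq_covMat_mulVec {Ω ι κ : Type*} [MeasurableSpace Ω] {μ : Measure Ω}
    [IsFiniteMeasure μ] [Fintype ι] [Fintype κ] {I : Ω → ι → ℝ} {X : Ω → κ → ℝ} {Y ε : Ω → ℝ}
    {β : κ → ℝ} (hI : Measurable I) (hIX : ∀ k l, Integrable (fun ω => I ω k * X ω l) μ)
    (hIε : ∀ k, Integrable (fun ω => I ω k * ε ω) μ) (hε : Integrable ε μ)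
    (hmodel : ∀ ω, Y ω = ∑ l, X ω l * β l + ε ω)
    (hexo : μ[ε | MeasurableSpace.comap I inferInstance] =ᵐ[μ] 0) :
    covVec μ I Y = covMat μ I X *ᵥ β := by
  funext k
  have horth : ∫ ω, I ω k * ε ω ∂μ = 0 :=
    integral_mul_eq_zero_of_condExp_eq_zero hI.comap_le
      ((measurable_pi_apply k).comp (comap_measurable I)).stronglyMeasurable (hIε k) hε hexo
  have hsplit : (fun ω => I ω k * Y ω)
      = fun ω => ∑ l, I ω k * X ω l * β l + I ω k * ε ω := by
    funext ω
    rw [hmodel, mul_add, Finset.mul_sum]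
    simp only [mul_assoc]
  have hint : ∀ l, Integrable (fun ω => I ω k * X ω l * β l) μ := fun l => (hIX k l).mul_const _
  simp only [covVec, hsplit]
  rw [integral_add (integrable_finsetSum _ fun l _ => hint l) (hIε k),
    integral_finsetSum _ fun l _ => hint l, horth, add_zero]
  simp [Matrix.mulVec, dotProduct, covMat, integral_mul_const]

theorem stmt_5_general
    (m d : ℕ) (βstar : Fin d → ℝ)
    (Ω : Type*) [MeasurableSpace Ω] (μ : Measure Ω) [IsProbabilityMeasure μ]
    -- the two samples (X is latent in the first, Ỹ plays no role)
    (I : ℕ → Ω → Fin m → ℝ) (X : ℕ → Ω → Fin d → ℝ) (Y : ℕ → Ω → ℝ) (ε : ℕ → Ω → ℝ)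
    (It : ℕ → Ω → Fin m → ℝ) (Xt : ℕ → Ω → Fin d → ℝ)
    -- sample sizes n, ñ with N = n + ñ and n/N → τ, ñ/N → τ̃
    (n nt : ℕ → ℕ)
    (τ τt : ℝ) (hτ : τ ∈ Set.Ioo (0:ℝ) 1) (hτt : τt ∈ Set.Ioo (0:ℝ) 1)
    (hτlim : Tendsto (fun N => (n N : ℝ) / N) atTop (𝓝 τ))
    (hτtlim : Tendsto (fun N => (nt N : ℝ) / N) atTop (𝓝 τt))
    -- measurability
    (hmeas : ∀ i, Measurable fun ω => (I i ω, X i ω, Y i ω))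
    (hmeast : ∀ j, Measurable fun ω => (It j ω, Xt j ω))
    -- i.i.d. within each sample, independence across samples
    (hiid1 : iIndepFun (fun i ω => (I i ω, X i ω, Y i ω)) μ)
    (hid1 : ∀ i, IdentDistrib (fun ω => (I i ω, X i ω, Y i ω))
      (fun ω => (I 0 ω, X 0 ω, Y 0 ω)) μ μ)
    (hiid2 : iIndepFun (fun j ω => (It j ω, Xt j ω)) μ)
    (hid2 : ∀ j, IdentDistrib (fun ω => (It j ω, Xt j ω))
      (fun ω => (It 0 ω, Xt 0 ω)) μ μ)
    -- bounded fourth moments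
    (hI4 : ∀ i k, MemLp (fun ω => I i ω k) 4 μ)
    (hX4 : ∀ i l, MemLp (fun ω => X i ω l) 4 μ)
    (hY4 : ∀ i, MemLp (Y i) 4 μ) (hε4 : ∀ i, MemLp (ε i) 4 μ)
    (hIt4 : ∀ j k, MemLp (fun ω => It j ω k) 4 μ)
    (hXt4 : ∀ j l, MemLp (fun ω => Xt j ω l) 4 μ)
    -- structural model Y_i = X_iᵀβ* + ε_i  and exogeneity E[ε_i | I_i] = 0
    (hmodel : ∀ i ω, Y i ω = (∑ l, X i ω l * βstar l) + ε i ω)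
    (hexo : ∀ i, μ[ε i | MeasurableSpace.comap (I i) inferInstance] =ᵐ[μ] 0)
    -- Assumption 1 (i): Cov(Ĩ,X̃) = Cov(I,X)
    (hcov : covMat μ (It 0) (Xt 0) = covMat μ (I 0) (X 0))
    -- rank condition
    (hrank : (covMat μ (I 0) (X 0)).rank = d)
    -- weight matrices W_N → W₀ in probability, W₀ positive definite
    (W : ℕ → Ω → Matrix (Fin m) (Fin m) ℝ)
    (W0 : Matrix (Fin m) (Fin m) ℝ) (hW0 : W0.PosDef)
    (hWprob : ∀ k l, ∀ δ > (0:ℝ),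
      Tendsto (fun N => μ {ω | δ ≤ |W N ω k l - W0 k l|}) atTop (𝓝 0))
    -- the GMM estimator: any minimizer of the GMM objective
    (bhat : ℕ → Ω → Fin d → ℝ)
    (hargmin : ∀ N ω (b : Fin d → ℝ),
      ghat I Y It Xt (n N) (nt N) ω (bhat N ω) ⬝ᵥ
          (W N ω *ᵥ ghat I Y It Xt (n N) (nt N) ω (bhat N ω))
        ≤ ghat I Y It Xt (n N) (nt N) ω b ⬝ᵥ
            (W N ω *ᵥ ghat I Y It Xt (n N) (nt N) ω b)) :
    -- conclusion: convergence in probability to β*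
    ∀ δ > (0:ℝ),
      Tendsto (fun N => μ {ω | δ < norm2 (fun j => bhat N ω j - βstar j)})
        atTop (𝓝 0) := by
  intro δ hδ
  set S := covMat μ (I 0) (X 0)
  have memLp_two : ∀ {f : Ω → ℝ}, MemLp f 4 μ → MemLp f 2 μ :=
    fun hf => hf.mono_exponent (by norm_num)
  have hS : Function.Injective S.mulVec := Matrix.mulVec_injective_of_rank_eq (by simpa using hrank)
  have hIY : covVec μ (I 0) (Y 0) = S *ᵥ βstar :=
    covVec_eq_covMat_mulVec (hmeas 0).fst
      (fun k l => (memLp_two (hI4 0 k)).integrable_mul (memLp_two (hX4 0 l)))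
      (fun k => (memLp_two (hI4 0 k)).integrable_mul (memLp_two (hε4 0)))
      ((hε4 0).integrable (by norm_num))
      (hmodel 0) (hexo 0)
  -- stated on the underlying function types: `Matrix` carries no metric instance
  have hShat : TendstoInMeasure (E := Fin m → Fin d → ℝ) μ (fun N ω => covHat It Xt (nt N) ω)
      atTop fun _ => S := by
    refine tendstoInMeasure_pi fun k => tendstoInMeasure_pi fun l => ?_
    have := tendstoInMeasure_average_comp
      (φ := fun p : (Fin m → ℝ) × (Fin d → ℝ) => p.1 k * p.2 l) hmeast (by fun_prop) hiid2 hid2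
      ((memLp_two (hIt4 0 k)).integrable_mul (memLp_two (hXt4 0 l)))
      (tendsto_atTop_of_tendsto_div_pos hτt.1 hτtlim)
    rwa [← hcov]
  have hvhat : TendstoInMeasure μ (fun N ω => covYHat I Y (n N) ω) atTop fun _ => S *ᵥ βstar := by
    refine tendstoInMeasure_pi fun k => ?_
    rw [← hIY]
    exact tendstoInMeasure_average_comp
      (φ := fun p : (Fin m → ℝ) × (Fin d → ℝ) × ℝ => p.1 k * p.2.2) hmeas (by fun_prop) hiid1
      hid1 ((memLp_two (hI4 0 k)).integrable_mul (memLp_two (hY4 0)))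
      (tendsto_atTop_of_tendsto_div_pos hτ.1 hτlim)
  have hWN : TendstoInMeasure (E := Fin m → Fin m → ℝ) μ (fun N ω => W N ω) atTop
      fun _ => W0 :=
    tendstoInMeasure_pi fun k => tendstoInMeasure_pi fun l => tendstoInMeasure_iff_dist.2
      fun η hη => by simpa [Real.dist_eq] using hWprob k l η hη
  have hZ : TendstoInMeasure (E := (Fin m → Fin d → ℝ) × (Fin m → ℝ) × (Fin m → Fin m → ℝ)) μ
      (fun N ω => (covHat It Xt (nt N) ω, covYHat I Y (n N) ω, W N ω)) atTop
      fun _ => (S, S *ᵥ βstar, W0) :=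
    hShat.prodMk (hvhat.prodMk hWN)
  refine tendsto_of_tendsto_of_tendsto_of_le_of_le tendsto_const_nhds
    (hZ.tendsto_measure_setOf_notMem
      (eventually_forall_minimizer_norm2_sub_le hS hW0 βstar hδ)) (fun _ => zero_le)
    fun N => measure_mono fun ω hω hgood => not_le.2 hω (hgood _ (hargmin N ω))

/-- Consistency of the dense unpaired GMM estimator: under
Assumption 2 the GMM estimator `β̂_GMM(W_N) = argmin_β ĝ_N(β)ᵀ W_N ĝ_N(β)`
converges in probability to `β*` as `N → ∞`. -/
theorem stmt_5
    (m d : ℕ) (βstar : Fin d → ℝ)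
    (Ω : Type*) [MeasurableSpace Ω] (μ : Measure Ω) [IsProbabilityMeasure μ]
    -- the two samples (X is latent in the first, Ỹ plays no role)
    (I : ℕ → Ω → Fin m → ℝ) (X : ℕ → Ω → Fin d → ℝ) (Y : ℕ → Ω → ℝ) (ε : ℕ → Ω → ℝ)
    (It : ℕ → Ω → Fin m → ℝ) (Xt : ℕ → Ω → Fin d → ℝ)
    -- sample sizes n, ñ with N = n + ñ and n/N → τ, ñ/N → τ̃
    (n nt : ℕ → ℕ) (hN : ∀ N, n N + nt N = N)
    (τ τt : ℝ) (hτ : τ ∈ Set.Ioo (0:ℝ) 1) (hτt : τt ∈ Set.Ioo (0:ℝ) 1)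
    (hτlim : Tendsto (fun N => (n N : ℝ) / N) atTop (𝓝 τ))
    (hτtlim : Tendsto (fun N => (nt N : ℝ) / N) atTop (𝓝 τt))
    -- measurability
    (hmeas : ∀ i, Measurable fun ω => (I i ω, X i ω, Y i ω))
    (hmeast : ∀ j, Measurable fun ω => (It j ω, Xt j ω))
    -- i.i.d. within each sample, independence across samples
    (hiid1 : iIndepFun (fun i ω => (I i ω, X i ω, Y i ω)) μ)
    (hid1 : ∀ i, IdentDistrib (fun ω => (I i ω, X i ω, Y i ω))
      (fun ω => (I 0 ω, X 0 ω, Y 0 ω)) μ μ)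
    (hiid2 : iIndepFun (fun j ω => (It j ω, Xt j ω)) μ)
    (hid2 : ∀ j, IdentDistrib (fun ω => (It j ω, Xt j ω))
      (fun ω => (It 0 ω, Xt 0 ω)) μ μ)
    (hindep : IndepFun (fun ω (i : ℕ) => (I i ω, X i ω, Y i ω))
      (fun ω (j : ℕ) => (It j ω, Xt j ω)) μ)
    -- bounded fourth moments
    (hI4 : ∀ i k, MemLp (fun ω => I i ω k) 4 μ)
    (hX4 : ∀ i l, MemLp (fun ω => X i ω l) 4 μ)
    (hY4 : ∀ i, MemLp (Y i) 4 μ) (hε4 : ∀ i, MemLp (ε i) 4 μ)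
    (hIt4 : ∀ j k, MemLp (fun ω => It j ω k) 4 μ)
    (hXt4 : ∀ j l, MemLp (fun ω => Xt j ω l) 4 μ)
    -- all variables are centered
    (hIc : ∀ i k, ∫ ω, I i ω k ∂μ = 0) (hXc : ∀ i l, ∫ ω, X i ω l ∂μ = 0)
    (hYc : ∀ i, ∫ ω, Y i ω ∂μ = 0)
    (hItc : ∀ j k, ∫ ω, It j ω k ∂μ = 0) (hXtc : ∀ j l, ∫ ω, Xt j ω l ∂μ = 0)
    -- structural model Y_i = X_iᵀβ* + ε_i  and exogeneity E[ε_i | I_i] = 0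
    (hmodel : ∀ i ω, Y i ω = (∑ l, X i ω l * βstar l) + ε i ω)
    (hexo : ∀ i, μ[ε i | MeasurableSpace.comap (I i) inferInstance] =ᵐ[μ] 0)
    -- Assumption 1 (i): Cov(Ĩ,X̃) = Cov(I,X)
    (hcov : covMat μ (It 0) (Xt 0) = covMat μ (I 0) (X 0))
    -- rank condition
    (hrank : (covMat μ (I 0) (X 0)).rank = d)
    -- weight matrices W_N → W₀ in probability, W₀ positive definite
    (W : ℕ → Ω → Matrix (Fin m) (Fin m) ℝ)
    (W0 : Matrix (Fin m) (Fin m) ℝ) (hW0 : W0.PosDef)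
    (hWmeas : ∀ N k l, Measurable fun ω => W N ω k l)
    (hWprob : ∀ k l, ∀ δ > (0:ℝ),
      Tendsto (fun N => μ {ω | δ ≤ |W N ω k l - W0 k l|}) atTop (𝓝 0))
    -- the GMM estimator: any minimizer of the GMM objective
    (bhat : ℕ → Ω → Fin d → ℝ)
    (hbmeas : ∀ N, Measurable fun ω => bhat N ω)
    (hargmin : ∀ N ω (b : Fin d → ℝ),
      ghat I Y It Xt (n N) (nt N) ω (bhat N ω) ⬝ᵥ
          (W N ω *ᵥ ghat I Y It Xt (n N) (nt N) ω (bhat N ω))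
        ≤ ghat I Y It Xt (n N) (nt N) ω b ⬝ᵥ
            (W N ω *ᵥ ghat I Y It Xt (n N) (nt N) ω b)) :
    -- conclusion: convergence in probability to β*
    ∀ δ > (0:ℝ),
      Tendsto (fun N => μ {ω | δ < norm2 (fun j => bhat N ω j - βstar j)})
        atTop (𝓝 0) :=
  stmt_5_general m d βstar Ω μ I X Y ε It Xt n nt τ τt hτ hτt hτlim hτtlim hmeas hmeast hiid1 hid1
    hiid2 hid2 hI4 hX4 hY4 hε4 hIt4 hXt4 hmodel hexo hcov hrank W W0 hW0 hWprob bhat hargmin
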